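/- Let A be an n×n matrix with nonnegative entries and fix a row i with positive row sum. Suppose a randomized procedure, given a vector x ∈ {0,1}ⁿ with ⟨A_{i*},x⟩ > 0, either returns the unique index j with x_j = 1 when x has exactly one 1, or splits x into y + z (y and z having disjoint supports partitioning the support of x) and recurses on y with probability ⟨A_{i*},y⟩/⟨A_{i*},x⟩ and on z with probability ⟨A_{i*},z⟩/⟨A_{i*},x⟩. Then for every column index j, the procedure started at x returns j with probability A_{ij}·x_j / ⟨A_{i*},x⟩. -/

import Mathlib

/-!
Induction on the number of ones of `x`, with weights `a = A i`. For a single one at `j₀` both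
sides are the indicator of `j₀`. For a split `x = y + z`, the branch weight `⟨a, y⟩ / ⟨a, x⟩`
cancels the normaliser `⟨a, y⟩` of the induction hypothesis, so the two branches contribute
`a j * y j / ⟨a, x⟩` and `a j * z j / ⟨a, x⟩`, which add up to the claim. A branch of weight
zero contributes nothing to either side, because then `a j * y j = 0`.
-/

open Finset

section ZeroOne

variable {ι : Type*} [Fintype ι]

lemma card_filter_eq_one_lt_of_split {x y z : ι → ℝ} (hy : ∀ k, y k = 0 ∨ y k = 1)
    (hz : ∀ k, z k = 0 ∨ z k = 1) (hxyz : ∀ k, x k = y k + z k)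
    (hdisj : ∀ k, ¬(y k = 1 ∧ z k = 1)) (hz1 : ∃ k, z k = 1) :
    #(univ.filter fun k => y k = 1) < #(univ.filter fun k => x k = 1) := by
  refine card_lt_card ((ssubset_iff_of_subset fun k hk => ?_).2 ?_)
  · simp only [mem_filter, mem_univ, true_and] at hk ⊢
    rcases hz k with h | h
    · rw [hxyz k, hk, h, add_zero]
    · exact absurd ⟨hk, h⟩ (hdisj k)
  · obtain ⟨k, hk⟩ := hz1
    refine ⟨k, ?_, fun hyk => hdisj k ⟨(mem_filter.1 hyk).2, hk⟩⟩
    rcases hy k with h | h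
    · simp [hxyz k, h, hk]
    · exact absurd ⟨h, hk⟩ (hdisj k)

lemma exists_eq_one_of_sum_mul_pos {a x : ι → ℝ} (hx : ∀ k, x k = 0 ∨ x k = 1)
    (hpos : 0 < ∑ u, a u * x u) : ∃ k, x k = 1 := by
  by_contra! h
  have hx0 : ∀ k, x k = 0 := fun k => (hx k).resolve_right (h k)
  simp [hx0] at hpos

lemma eq_one_and_eq_zero_of_filter_eq_singleton {x : ι → ℝ} (hx : ∀ k, x k = 0 ∨ x k = 1)
    {j₀ : ι} (h : univ.filter (fun k => x k = 1) = {j₀}) :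
    x j₀ = 1 ∧ ∀ k, k ≠ j₀ → x k = 0 := by
  have hmem : ∀ k, x k = 1 ↔ k = j₀ := fun k => by
    simpa using congrArg (k ∈ ·) h
  exact ⟨(hmem j₀).2 rfl, fun k hk => (hx k).resolve_right (mt (hmem k).1 hk)⟩

lemma mul_div_sum_mul_eq_ite [DecidableEq ι] {a x : ι → ℝ} {j₀ : ι} (hxj₀ : x j₀ = 1)
    (hx0 : ∀ k, k ≠ j₀ → x k = 0) (hpos : 0 < ∑ u, a u * x u) (j : ι) :
    a j * x j / ∑ u, a u * x u = if j = j₀ then 1 else 0 := by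
  have hsum : ∑ u, a u * x u = a j₀ := by
    rw [Fintype.sum_eq_single j₀ fun k hk => by rw [hx0 k hk, mul_zero], hxj₀, mul_one]
  rw [hsum] at hpos ⊢
  split_ifs with hj
  · rw [hj, hxj₀, mul_one, div_self hpos.ne']
  · rw [hx0 j hj, mul_zero, zero_div]

lemma sum_mul_div_mul_eq {a y : ι → ℝ} (ha : ∀ u, 0 ≤ a u) (hy : ∀ k, y k = 0 ∨ y k = 1)
    {S p : ℝ} {j : ι} (hp : 0 < ∑ u, a u * y u → p = a j * y j / ∑ u, a u * y u) :
    (∑ u, a u * y u) / S * p = a j * y j / S := by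
  have hterm : ∀ u, 0 ≤ a u * y u := fun u =>
    mul_nonneg (ha u) (by rcases hy u with h | h <;> simp [h])
  rcases (sum_nonneg fun u _ => hterm u).eq_or_lt with h0 | hpos
  · have hj : a j * y j = 0 :=
      (sum_eq_zero_iff_of_nonneg fun u _ => hterm u).1 h0.symm j (mem_univ j)
    rw [← h0, hj, zero_div, zero_mul]
  · rw [hp hpos]
    field_simp

end ZeroOne

/-- Correctness of the REGR sampling procedure: if `P x j` denotes the probability
that the recursive procedure started at the 0/1-vector `x` returns column `j`
(base case: `x` has a single `1`; recursive case: split `x = y + z` into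
disjointly supported 0/1-vectors and recurse with probabilities proportional to
`⟨A_{i*},y⟩` and `⟨A_{i*},z⟩`), then `P x j = A i j * x j / ⟨A_{i*}, x⟩`
whenever `⟨A_{i*}, x⟩ > 0`. -/
theorem stmt_5 (n : ℕ) (A : Matrix (Fin n) (Fin n) ℝ)
    (hA : ∀ i j, 0 ≤ A i j) (i : Fin n)
    (P : (Fin n → ℝ) → Fin n → ℝ)
    (hbase : ∀ x : Fin n → ℝ, (∀ k, x k = 0 ∨ x k = 1) →
      ∀ j0 : Fin n, x j0 = 1 → (∀ k, k ≠ j0 → x k = 0) →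
      ∀ j, P x j = if j = j0 then 1 else 0)
    (hsplit : ∀ x : Fin n → ℝ, (∀ k, x k = 0 ∨ x k = 1) →
      1 < (Finset.univ.filter fun k => x k = 1).card →
      ∃ y z : Fin n → ℝ,
        (∀ k, y k = 0 ∨ y k = 1) ∧ (∀ k, z k = 0 ∨ z k = 1) ∧
        (∀ k, x k = y k + z k) ∧ (∀ k, ¬(y k = 1 ∧ z k = 1)) ∧
        (∃ k, y k = 1) ∧ (∃ k, z k = 1) ∧
        (∀ j, P x j = ((∑ u, A i u * y u) / (∑ u, A i u * x u)) * P y j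
                    + ((∑ u, A i u * z u) / (∑ u, A i u * x u)) * P z j)) :
    ∀ x : Fin n → ℝ, (∀ k, x k = 0 ∨ x k = 1) →
      0 < ∑ u, A i u * x u →
      ∀ j, P x j = A i j * x j / ∑ u, A i u * x u := by
  intro x hx
  induction hm : #(univ.filter fun k => x k = 1) using Nat.strong_induction_on generalizing x
    with | _ m ih => ?_
  intro hpos j
  obtain ⟨k, hk⟩ := exists_eq_one_of_sum_mul_pos hx hpos
  have hm1 : 1 ≤ m := hm ▸ card_pos.2 ⟨k, by simp [hk]⟩
  rcases hm1.eq_or_lt with hone | hmany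
  · obtain ⟨j₀, hj₀⟩ := card_eq_one.1 (hm.trans hone.symm)
    obtain ⟨hxj₀, hx0⟩ := eq_one_and_eq_zero_of_filter_eq_singleton hx hj₀
    rw [hbase x hx j₀ hxj₀ hx0 j, mul_div_sum_mul_eq_ite hxj₀ hx0 hpos]
  · obtain ⟨y, z, hy, hz, hxyz, hdisj, hy1, hz1, hP⟩ := hsplit x hx (hm ▸ hmany)
    have hy_lt := hm ▸ card_filter_eq_one_lt_of_split hy hz hxyz hdisj hz1
    have hz_lt := hm ▸ card_filter_eq_one_lt_of_split hz hy (fun k => (hxyz k).trans (add_comm _ _))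
      (fun k h => hdisj k h.symm) hy1
    rw [hP j, sum_mul_div_mul_eq (hA i) hy (ih _ hy_lt y hy rfl · j),
      sum_mul_div_mul_eq (hA i) hz (ih _ hz_lt z hz rfl · j), ← add_div, hxyz j, mul_add]
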